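/- PinSketch secure sketch for set difference: let F = GF(2^k), let U = F ∖ {0}, and let n = 2^k − 1. For a subset w ⊆ U define SS(w) = (s₁, s₃, s₅, …, s_{2t−1}) where s_i = Σ_{x∈w} x^i ∈ F. Then there exists a recovery procedure Rec such that (SS, Rec) is an average-case (SDif(U), m, m − t·log₂(n+1), t)-secure sketch for every m; its storage is t·log₂(n+1) bits, and it handles input sets of arbitrary (flexible) size. -/
import Mathlib


open Finset

/-- A probability distribution on a finite type. -/
def IsDist {α : Type*} [Fintype α] (p : α → ℝ) : Prop :=
  (∀ a, 0 ≤ p a) ∧ ∑ a, p a = 1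

/-- Average min-entropy `H̃∞(A | B)`. -/
noncomputable def avgMinEntropy {α β : Type*} [Fintype α] [Fintype β] (p : α × β → ℝ) : ℝ :=
  - Real.logb 2 (∑ b, ⨆ a, p (a, b))

/-- The PinSketch of a subset `w ⊆ F ∖ {0}`: the odd power sums
`(s₁, s₃, …, s_{2t−1})` with `s_i = ∑_{x ∈ w} xⁱ`. -/
def pinSketch {F : Type} [Field F] [DecidableEq F] (t : ℕ)
    (w : {w : Finset F // (0 : F) ∉ w}) : Fin t → F :=
  fun i => ∑ x ∈ w.1, x ^ (2 * i.1 + 1)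

/-- A finite field of cardinality `2 ^ k` has characteristic `2`. -/
lemma PinSketchAux.char2 {F : Type} [Field F] [Fintype F] (k : ℕ)
    (hcard : Fintype.card F = 2 ^ k) : CharP F 2 := by
  obtain ⟨p, hp⟩ := CharP.exists F
  haveI := hp
  obtain ⟨n, hpn, hcardp⟩ := FiniteField.card F p
  have h2 : p ∣ 2 ^ k := by
    rw [← hcard, hcardp]; exact dvd_pow_self p n.pos.ne'
  have : p = 2 := (Nat.prime_dvd_prime_iff_eq hpn Nat.prime_two).mp (hpn.dvd_of_dvd_pow h2)
  rwa [this] at hp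

/-- A nonempty set of distinct nonzero field elements cannot have all its power sums
`s_1, …, s_{|S|}` equal to zero (Vandermonde argument). -/
lemma PinSketchAux.vandermonde_aux {F : Type} [Field F] [DecidableEq F] (S : Finset F)
    (h0 : (0:F) ∉ S) (hne : S.Nonempty)
    (h : ∀ j, 1 ≤ j → j ≤ S.card → ∑ x ∈ S, x ^ j = 0) : False := by
  classical
  set d := S.card with hd
  have hdpos : 0 < d := Finset.card_pos.mpr hne
  let e : Fin d ≃ {x // x ∈ S} := S.equivFin.symm
  let v : Fin d → F := fun i => (e i : F)
  have hvinj : Function.Injective v := fun i j hij => e.injective (Subtype.ext hij)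
  have hv0 : ∀ i, v i ≠ 0 := fun i hi => h0 (hi ▸ (e i).2)
  let M : Matrix (Fin d) (Fin d) F := Matrix.of fun i j => v j ^ (i.1 + 1)
  have hMdet : M.det ≠ 0 := by
    have hM : M = (Matrix.vandermonde v).transpose * Matrix.diagonal v := by
      ext i j
      simp [Matrix.mul_apply, Matrix.diagonal, Matrix.vandermonde, M,
        Finset.sum_ite_eq, pow_succ]
    rw [hM, Matrix.det_mul, Matrix.det_transpose, Matrix.det_diagonal]
    refine mul_ne_zero ?_ ?_
    · exact Matrix.det_vandermonde_ne_zero_iff.mpr hvinj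
    · exact Finset.prod_ne_zero_iff.mpr fun i _ => hv0 i
  have hmv : M.mulVec (fun _ => 1) = 0 := by
    funext i
    have hz : ∑ x ∈ S, x ^ (i.1+1) = 0 := h _ (Nat.le_add_left _ _) (by omega)
    have hcalc : M.mulVec (fun _ => 1) i = ∑ j, v j ^ (i.1+1) := by
      simp [Matrix.mulVec, dotProduct, M]
    rw [hcalc]
    have : ∑ j, v j ^ (i.1+1) = ∑ x ∈ S.attach, (x : F) ^ (i.1+1) :=
      Fintype.sum_equiv e _ _ (fun j => rfl)
    rw [this, Finset.sum_attach S (fun x => x ^ (i.1+1)), hz]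
    rfl
  have hz := Matrix.eq_zero_of_mulVec_eq_zero hMdet hmv
  exact one_ne_zero (congrFun hz ⟨0, hdpos⟩)

/-- In characteristic two, sums over a symmetric difference add up. -/
lemma PinSketchAux.sum_symmDiff_char2 {F : Type} [Field F] [CharP F 2] [DecidableEq F]
    (a b : Finset F) (f : F → F) :
    ∑ x ∈ symmDiff a b, f x = ∑ x ∈ a, f x + ∑ x ∈ b, f x := by
  classical
  have hdisj : Disjoint (a \ b) (b \ a) := disjoint_sdiff_sdiff
  have h1 : ∑ x ∈ a \ b, f x + ∑ x ∈ a ∩ b, f x = ∑ x ∈ a, f x := by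
    rw [← Finset.sdiff_inter_self_left a b]
    exact Finset.sum_sdiff Finset.inter_subset_left
  have h2 : ∑ x ∈ b \ a, f x + ∑ x ∈ a ∩ b, f x = ∑ x ∈ b, f x := by
    rw [Finset.inter_comm, ← Finset.sdiff_inter_self_left b a]
    exact Finset.sum_sdiff Finset.inter_subset_left
  have hc : ∑ x ∈ a ∩ b, f x + ∑ x ∈ a ∩ b, f x = 0 := CharTwo.add_self_eq_zero _
  rw [symmDiff_def, Finset.sup_eq_union, Finset.sum_union hdisj]
  linear_combination h1 + h2 - hc

/-- Sets within set-difference distance `2t` with equal PinSketches are equal. -/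
lemma PinSketchAux.pinSketch_inj {F : Type} [Field F] [CharP F 2] [DecidableEq F] (t : ℕ)
    (v w : {w : Finset F // (0:F) ∉ w})
    (hs : pinSketch t v = pinSketch t w) (hd : (symmDiff v.1 w.1).card ≤ 2 * t) :
    v = w := by
  classical
  by_contra hvw
  set S := symmDiff v.1 w.1 with hS
  have hSne : S.Nonempty := by
    rw [Finset.nonempty_iff_ne_empty]
    intro h
    exact hvw (Subtype.ext (symmDiff_eq_bot.mp h))
  have h0S : (0:F) ∉ S := by
    intro h
    rcases Finset.mem_symmDiff.mp h with ⟨h1, _⟩ | ⟨h1, _⟩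
    · exact v.2 h1
    · exact w.2 h1
  have hodd : ∀ i < t, ∑ x ∈ S, x ^ (2*i+1) = 0 := by
    intro i hi
    have hfi : ∑ x ∈ v.1, x ^ (2*i+1) = ∑ x ∈ w.1, x ^ (2*i+1) := congrFun hs ⟨i, hi⟩
    rw [hS, PinSketchAux.sum_symmDiff_char2, hfi]
    exact CharTwo.add_self_eq_zero _
  have hall : ∀ j, 1 ≤ j → j ≤ 2*t → ∑ x ∈ S, x ^ j = 0 := by
    intro j
    induction j using Nat.strong_induction_on with
    | _ j ih =>
      intro h1 h2
      rcases Nat.even_or_odd j with he | ho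
      · obtain ⟨j', rfl⟩ := he
        have hz : ∑ x ∈ S, x ^ j' = 0 := ih j' (by omega) (by omega) (by omega)
        have hsq : ∑ x ∈ S, x ^ (j' + j') = (∑ x ∈ S, x ^ j') ^ 2 := by
          rw [CharTwo.sum_sq]
          exact Finset.sum_congr rfl fun x _ => by rw [← pow_mul]; ring_nf
        rw [hsq, hz]
        ring
      · obtain ⟨i, rfl⟩ := ho
        exact hodd i (by omega)
  exact PinSketchAux.vandermonde_aux S h0S hSne
    fun j hj1 hj2 => hall j hj1 (le_trans hj2 hd)

/-- Positivity of the sum of columnwise suprema of a probability distribution. -/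
lemma PinSketchAux.sup_pos {γ δ : Type} [Fintype γ] [Fintype δ] [Nonempty γ] (f : γ × δ → ℝ)
    (h0 : ∀ x, 0 ≤ f x) (h1 : ∑ x, f x = 1) : 0 < ∑ d : δ, ⨆ c, f (c, d) := by
  have hle : ∀ d c, f (c, d) ≤ ⨆ c', f (c', d) := fun d c =>
    le_ciSup (Set.Finite.bddAbove (Set.finite_range (fun c' => f (c', d)))) c
  have hbound : (1:ℝ) ≤ (Fintype.card γ : ℝ) * ∑ d : δ, ⨆ c, f (c, d) := by
    calc (1:ℝ) = ∑ c : γ, ∑ d : δ, f (c, d) := by rw [← h1, Fintype.sum_prod_type]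
    _ ≤ ∑ c : γ, ∑ d : δ, ⨆ c', f (c', d) := by
        refine Finset.sum_le_sum fun c _ => Finset.sum_le_sum fun d _ => hle d c
    _ = (Fintype.card γ : ℝ) * ∑ d : δ, ⨆ c, f (c, d) := by
        rw [Finset.sum_const, Finset.card_univ, nsmul_eq_mul]
  nlinarith [Nat.cast_nonneg (α := ℝ) (Fintype.card γ),
    Finset.sum_nonneg (fun d (_ : d ∈ Finset.univ) =>
      le_trans (h0 (Classical.arbitrary γ, d)) (hle d _))]

/-- PinSketch: over `F = GF(2^k)` with universe `U = F ∖ {0}` of size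
`n = 2^k − 1`, the map `SS(w) = (s₁, s₃, …, s_{2t−1})` of odd power sums, together with a
suitable recovery procedure, is an average-case `(SDif(U), m, m − t·log₂(n+1), t)`-secure
sketch for every `m` (handling sets of arbitrary size); note `log₂(n+1) = log₂|F| = k`. -/
theorem pinSketch_secure_sketch {F : Type} [Field F] [Fintype F] [DecidableEq F]
    (k : ℕ) (hk : 1 ≤ k) (hcard : Fintype.card F = 2 ^ k) (t : ℕ) (m : ℝ) :
    ∃ Rec : {w : Finset F // (0 : F) ∉ w} → (Fin t → F) → {w : Finset F // (0 : F) ∉ w},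
      -- correctness
      (∀ w w' : {w : Finset F // (0 : F) ∉ w},
        (symmDiff w.1 w'.1).card ≤ t → Rec w' (pinSketch t w) = w) ∧
      -- average-case security with entropy loss t·log₂(n+1)
      ∀ (ι : Type) [Fintype ι] (p : {w : Finset F // (0 : F) ∉ w} × ι → ℝ),
        IsDist p → m ≤ avgMinEntropy p →
        m - (t : ℝ) * Real.logb 2 (Fintype.card F : ℝ)
          ≤ avgMinEntropy (fun x : {w : Finset F // (0 : F) ∉ w} × (Fin t → F) × ι =>
              if pinSketch t x.1 = x.2.1 then p (x.1, x.2.2) else 0) := by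
  classical
  haveI : CharP F 2 := PinSketchAux.char2 k hcard
  haveI hNe : Nonempty {w : Finset F // (0 : F) ∉ w} := ⟨⟨∅, Finset.notMem_empty 0⟩⟩
  refine ⟨fun w' s =>
      if h : ∃ v : {w : Finset F // (0:F) ∉ w},
        (symmDiff v.1 w'.1).card ≤ t ∧ pinSketch t v = s then h.choose else w', ?_, ?_⟩
  · -- correctness
    intro w w' hww'
    have hex : ∃ v : {w : Finset F // (0:F) ∉ w},
        (symmDiff v.1 w'.1).card ≤ t ∧ pinSketch t v = pinSketch t w :=
      ⟨w, hww', rfl⟩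
    beta_reduce
    rw [dif_pos hex]
    obtain ⟨h1, h2⟩ := hex.choose_spec
    refine PinSketchAux.pinSketch_inj t _ _ h2 ?_
    have htri : symmDiff hex.choose.1 w.1 ⊆ symmDiff hex.choose.1 w'.1 ∪ symmDiff w'.1 w.1 := by
      have := symmDiff_triangle hex.choose.1 w'.1 w.1
      rwa [Finset.sup_eq_union] at this
    have hcomm : (symmDiff w'.1 w.1).card ≤ t := by rw [symmDiff_comm]; exact hww'
    calc (symmDiff hex.choose.1 w.1).card
        ≤ (symmDiff hex.choose.1 w'.1 ∪ symmDiff w'.1 w.1).card := Finset.card_le_card htri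
      _ ≤ (symmDiff hex.choose.1 w'.1).card + (symmDiff w'.1 w.1).card :=
          Finset.card_union_le _ _
      _ ≤ 2 * t := by omega
  · -- security
    intro ι _ p hp hm
    set q : {w : Finset F // (0:F) ∉ w} × (Fin t → F) × ι → ℝ :=
      fun x => if pinSketch t x.1 = x.2.1 then p (x.1, x.2.2) else 0 with hqdef
    have hq0 : ∀ x, 0 ≤ q x := by
      intro x
      rw [hqdef]
      dsimp only
      split
      · exact hp.1 _
      · exact le_refl 0
    have hq1 : ∑ x, q x = 1 := by
      rw [Fintype.sum_prod_type]
      have hinner : ∀ a, (∑ y : (Fin t → F) × ι, q (a, y)) = ∑ i : ι, p (a, i) := by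
        intro a
        rw [Fintype.sum_prod_type, Finset.sum_comm]
        refine Finset.sum_congr rfl fun i _ => ?_
        simp [hqdef, Finset.sum_ite_eq]
      rw [Finset.sum_congr rfl (fun a _ => hinner a), ← Fintype.sum_prod_type]
      exact hp.2
    set P : ℝ := ∑ i : ι, ⨆ a, p (a, i) with hPdef
    set Q : ℝ := ∑ b : (Fin t → F) × ι, ⨆ a, q (a, b) with hQdef
    have hPpos : 0 < P := PinSketchAux.sup_pos p hp.1 hp.2
    have hQpos : 0 < Q := PinSketchAux.sup_pos q hq0 hq1
    have hsupb : ∀ b : (Fin t → F) × ι, (⨆ a, q (a, b)) ≤ ⨆ a, p (a, b.2) := by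
      intro b
      refine ciSup_le fun a => ?_
      have h1 : q (a, b) ≤ p (a, b.2) := by
        rw [hqdef]
        dsimp only
        split
        · exact le_refl _
        · exact hp.1 _
      exact le_trans h1 (le_ciSup (Set.Finite.bddAbove
        (Set.finite_range (fun a' => p (a', b.2)))) a)
    have hQle : Q ≤ (Fintype.card F : ℝ) ^ t * P := by
      calc Q ≤ ∑ b : (Fin t → F) × ι, ⨆ a, p (a, b.2) :=
            Finset.sum_le_sum fun b _ => hsupb b
        _ = ∑ _s : Fin t → F, ∑ i : ι, ⨆ a, p (a, i) := Fintype.sum_prod_type _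
        _ = (Fintype.card (Fin t → F) : ℝ) * P := by
            rw [Finset.sum_const, Finset.card_univ, nsmul_eq_mul, hPdef]
        _ = (Fintype.card F : ℝ) ^ t * P := by
            rw [Fintype.card_fun, Fintype.card_fin, Nat.cast_pow]
    have hcFpos : (0:ℝ) < (Fintype.card F : ℝ) := by
      exact_mod_cast Fintype.card_pos
    have hlog : Real.logb 2 Q ≤ Real.logb 2 ((Fintype.card F : ℝ) ^ t * P) :=
      Real.logb_le_logb_of_le one_lt_two hQpos hQle
    have hsplit : Real.logb 2 ((Fintype.card F : ℝ) ^ t * P)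
        = (t : ℝ) * Real.logb 2 (Fintype.card F : ℝ) + Real.logb 2 P := by
      rw [Real.logb_mul (by positivity) (ne_of_gt hPpos), Real.logb_pow]
    have hmP : m ≤ - Real.logb 2 P := hm
    show m - (t : ℝ) * Real.logb 2 (Fintype.card F : ℝ) ≤ - Real.logb 2 Q
    linarith
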